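/- Let R be a unital non-associative ring, G a commutative monoid, π a G-derivation on R, S = R[G;π] the Ore monoid ring, and s ∈ S^G. If condition (D7) holds, then for all u,v ∈ S the associator (u,s,v) lies in the additive subgroup of S generated by the products (r,s,t)·w with r,t ∈ R and w ∈ S; in particular, if (r,s,t) = 0 for all r,t ∈ R, then s ∈ N_m(S). If condition (D8) holds, then for all u,v ∈ S the associator (u,v,s) lies in the additive subgroup of S generated by the products (r,t,s)·w with r,t ∈ R and w ∈ S; in particular, if (r,t,s) = 0 for all r,t ∈ R, then s ∈ N_r(S). -/

import Mathlib

open scoped Classical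

/-! Common framework: Ore monoid rings `R[G;π]` over a unital non-associative ring `R`
and a monoid `G`.  A `G`-derivation `π = {π^a_b}` is encoded as a map
`π : G → R → (G →₀ R)`, where `π a r b = π^a_b(r)`; axiom (D0) (finite support in `b`)
is built into the `Finsupp` encoding.  The Ore monoid ring `S = R[G;π]` is the
additive group `G →₀ R` of finitely supported formal sums `Σ r_a xᵃ`
(with `Finsupp.single a r` representing `r xᵃ`), equipped with the
multiplication `GDeriv.mul` below. -/

/-- A two-sided ideal with respect to a (possibly non-associative, non-unital)
multiplication `m` on an additive group `A`. -/
structure IsIdealWith {A : Type*} [AddCommGroup A] (m : A → A → A) (J : Set A) : Prop where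
  zero_mem : (0 : A) ∈ J
  add_mem : ∀ {x y : A}, x ∈ J → y ∈ J → x + y ∈ J
  neg_mem : ∀ {x : A}, x ∈ J → -x ∈ J
  mul_mem_left : ∀ (r : A) {x : A}, x ∈ J → m r x ∈ J
  mul_mem_right : ∀ {x : A} (r : A), x ∈ J → m x r ∈ J

/-- The subset `F` of `A` is a field with respect to the multiplication `m` with
identity `one`: it is a commutative unital subring in which every nonzero element
has a multiplicative inverse. -/
def IsFieldWith {A : Type*} [AddCommGroup A] (m : A → A → A) (one : A) (F : Set A) : Prop :=
  one ∈ F ∧ (∀ x ∈ F, ∀ y ∈ F, x + y ∈ F) ∧ (∀ x ∈ F, -x ∈ F) ∧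
  (∀ x ∈ F, ∀ y ∈ F, m x y ∈ F) ∧ (∀ x ∈ F, ∀ y ∈ F, m x y = m y x) ∧
  (∀ x ∈ F, x ≠ 0 → ∃ y ∈ F, m x y = one ∧ m y x = one)

/-- A `G`-derivation on `R`: axioms (D0)–(D4).  Here `π a r b` denotes `π^a_b(r)`,
and (D0) holds by the finite support of `π a r : G →₀ R`. -/
structure GDeriv (R : Type*) [NonAssocRing R] (G : Type*) [Monoid G] where
  /-- the family of maps; `π a r b = π^a_b(r)` -/
  π : G → R → (G →₀ R)
  /-- (D1): `π^e_e = id` and `π^e_a = 0` for `a ≠ e` -/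
  d1 : ∀ r : R, π 1 r = Finsupp.single 1 r
  /-- (D2): `π^a_b(1) = δ_{a,b}` -/
  d2 : ∀ a : G, π a (1 : R) = Finsupp.single a (1 : R)
  /-- (D3): each `π^a_b` is additive -/
  d3 : ∀ (a : G) (r s : R), π a (r + s) = π a r + π a s
  /-- (D4): `π^{ab}_c = Σ_{df = c} π^a_d ∘ π^b_f` -/
  d4 : ∀ (a b : G) (r : R),
    π (a * b) r = (π b r).sum fun f s => (π a s).sum fun d t => Finsupp.single (d * f) t

namespace GDeriv

variable {R : Type*} [NonAssocRing R] {G : Type*} [Monoid G] (P : GDeriv R G)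

/-- The multiplication of the Ore monoid ring `S = R[G;π]` on `G →₀ R`:
the biadditive extension of `(r xᵃ)(s xᵇ) = Σ_c r π^a_c(s) x^{cb}`. -/
noncomputable def mul (u v : G →₀ R) : G →₀ R :=
  u.sum fun a r => v.sum fun b s => (P.π a s).sum fun c t => Finsupp.single (c * b) (r * t)

/-- The multiplicative identity `1·xᵉ` of `S`. -/
noncomputable def one (_P : GDeriv R G) : G →₀ R := Finsupp.single 1 1

/-- `R^G = {r ∈ R : π^a_b(r) = δ_{a,b} r}`. -/
def fixed : Set R := {r | ∀ a : G, P.π a r = Finsupp.single a r}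

/-- `S^G = Σ_a R^G xᵃ`, the elements of `S` all of whose coefficients lie in `R^G`. -/
def fixedS : Set (G →₀ R) := {u | ∀ c : G, u c ∈ P.fixed}

/-- (D7): every `π^a_b` is left `R^G`-linear. -/
def LeftLinear : Prop := ∀ a b : G, ∀ s ∈ P.fixed, ∀ r : R, P.π a (s * r) b = s * P.π a r b

/-- (D8): every `π^a_b` is right `R^G`-linear. -/
def RightLinear : Prop := ∀ a b : G, ∀ r : R, ∀ s ∈ P.fixed, P.π a (r * s) b = P.π a r b * s

/-- `π` is strong if (D7) or (D8) holds. -/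
def Strong : Prop := P.LeftLinear ∨ P.RightLinear

/-- (D6): `π^a_a = id_R` for all `a ∈ G` (i.e. `π` is unital). -/
def Unital : Prop := ∀ (a : G) (r : R), P.π a r a = r

/-- `π` is commutative: `π^a_b ∘ π^c_d = π^c_d ∘ π^a_b`. -/
def Commutes : Prop := ∀ (a b c d : G) (r : R), P.π a (P.π c r d) b = P.π c (P.π a r b) d

/-- `π` is well-ordered: there is a well-order on `G` whose strict part `lt`
satisfies `π^a_b = 0` whenever `a ≺ b`. -/
def WellOrdered : Prop :=
  ∃ lt : G → G → Prop, IsWellOrder G lt ∧ ∀ a b : G, lt a b → ∀ r : R, P.π a r b = 0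

/-- The extension `π̃^a_b : S → S`, `π̃^a_b(Σ_c r_c x^c) = Σ_c π^a_b(r_c) x^c`. -/
noncomputable def ext (a b : G) (u : G →₀ R) : G →₀ R := u.sum fun c r => Finsupp.single c (P.π a r b)

/-- The commutator `[u,v] = uv - vu` in `S`. -/
noncomputable def commS (u v : G →₀ R) : G →₀ R := P.mul u v - P.mul v u

/-- The associator `(u,v,w) = (uv)w - u(vw)` in `S`. -/
noncomputable def assocS (u v w : G →₀ R) : G →₀ R := P.mul (P.mul u v) w - P.mul u (P.mul v w)

/-- The left nucleus `N_l(S)`. -/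
def Nl : Set (G →₀ R) := {u | ∀ v w, P.assocS u v w = 0}

/-- The middle nucleus `N_m(S)`. -/
def Nm : Set (G →₀ R) := {u | ∀ v w, P.assocS v u w = 0}

/-- The right nucleus `N_r(S)`. -/
def Nr : Set (G →₀ R) := {u | ∀ v w, P.assocS v w u = 0}

/-- The commuter `C(S)`. -/
def CS : Set (G →₀ R) := {u | ∀ v, P.mul u v = P.mul v u}

/-- The center `Z(S) = C(S) ∩ N_l(S) ∩ N_m(S) ∩ N_r(S)`. -/
def Z : Set (G →₀ R) := P.CS ∩ (P.Nl ∩ P.Nm ∩ P.Nr)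

/-- `Z(S)^G = {s ∈ Z(S) : π̃^a_b(s) = δ_{a,b} s}`. -/
def ZG : Set (G →₀ R) :=
  {s | s ∈ P.Z ∧ ∀ a b : G, P.ext a b s = if a = b then s else 0}

/-- `R` is `G`-simple: `{0}` and `R` are the only `G`-invariant ideals of `R`. -/
def RSimple : Prop :=
  ∀ J : Set R, IsIdealWith (· * ·) J → (∀ a b : G, ∀ r ∈ J, P.π a r b ∈ J) →
    J = {0} ∨ J = Set.univ

/-- `S` is `G`-simple: `{0}` and `S` are the only ideals of `S` invariant under all `π̃^a_b`. -/
def SSimple : Prop :=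
  ∀ J : Set (G →₀ R), IsIdealWith P.mul J → (∀ a b : G, ∀ u ∈ J, P.ext a b u ∈ J) →
    J = {0} ∨ J = Set.univ

end GDeriv

/-! Both associators are additive in each argument and an element of `S^G` is a sum of
monomials `σ xᶜ` with `σ ∈ R^G`, so everything reduces to monomials. Since `σ` is fixed,
`(r xᵃ)(σ xᶜ) = rσ x^{ac}`; (D7) moves `σ` out of `π^a_d`, and (D4) recombines `π^a ∘ π^c`
into `π^{ac}`, giving `(r xᵃ, σ xᶜ, t xᵇ) = Σ_e (r, σ, π^{ac}_e(t)) x^{eb}`. Splitting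
`π^{ca} = π^{ac}` the other way by (D4), which is where commutativity of `G` enters, regroups
this as `Σ_d (r, σ xᶜ, π^a_d(t)) · x^{db}`. With (D8) the same computation gives
`(r xᵃ, t xᵇ, σ xᵉ) = Σ_c (r, π^a_c(t), σ xᵉ) · x^{cb}`. -/

lemma AddSubgroup.mem_of_biadditive_of_single_mem {α M N : Type*} [AddCommMonoid M]
    [AddCommGroup N] (H : AddSubgroup N) {F : (α →₀ M) → (α →₀ M) → N}
    (hl : ∀ u u' v, F (u + u') v = F u v + F u' v)
    (hr : ∀ u v v', F u (v + v') = F u v + F u v')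
    (h : ∀ a r b t, F (Finsupp.single a r) (Finsupp.single b t) ∈ H) (u v : α →₀ M) :
    F u v ∈ H := by
  induction u using Finsupp.induction_linear with
  | zero =>
    rw [show F 0 v = 0 from map_zero (AddMonoidHom.mk' (F · v) (hl · · v))]
    exact H.zero_mem
  | add u u' hu hu' => exact hl u u' v ▸ H.add_mem hu hu'
  | single a r =>
    induction v using Finsupp.induction_linear with
    | zero =>
      rw [show F _ 0 = 0 from map_zero (AddMonoidHom.mk' (F (Finsupp.single a r)) (hr _))]
      exact H.zero_mem
    | add v v' hv hv' => exact hr _ v v' ▸ H.add_mem hv hv'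
    | single b t => exact h a r b t

namespace GDeriv

section Monoid

variable {R : Type*} [NonAssocRing R] {G : Type*} [Monoid G] (P : GDeriv R G)

lemma pi_zero (a : G) : P.π a 0 = 0 :=
  map_zero (AddMonoidHom.mk' (P.π a) (P.d3 a))

lemma sum_pi_mul {M : Type*} [AddCommMonoid M] (a c : G) (t : R) (H : G → R → M)
    (H0 : ∀ e, H e 0 = 0) (Hadd : ∀ e z₁ z₂, H e (z₁ + z₂) = H e z₁ + H e z₂) :
    (P.π (a * c) t).sum H
      = (P.π c t).sum fun f x => (P.π a x).sum fun d y => H (d * f) y := by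
  rw [P.d4, Finsupp.sum_sum_index H0 Hadd]
  refine Finsupp.sum_congr fun f _ => ?_
  rw [Finsupp.sum_sum_index H0 Hadd]
  exact Finsupp.sum_congr fun d _ => Finsupp.sum_single_index (H0 _)

lemma pi_mul_left_of_mem_fixed (hL : P.LeftLinear) {σ : R} (hσ : σ ∈ P.fixed)
    (a : G) (y : R) :
    P.π a (σ * y) = (P.π a y).mapRange (σ * ·) (mul_zero σ) :=
  Finsupp.ext fun b => hL a b σ hσ y

lemma pi_mul_right_of_mem_fixed (hR : P.RightLinear) {σ : R} (hσ : σ ∈ P.fixed)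
    (a : G) (y : R) :
    P.π a (y * σ) = (P.π a y).mapRange (· * σ) (zero_mul σ) :=
  Finsupp.ext fun b => hR a b y σ hσ

lemma add_mul (u v w : G →₀ R) : P.mul (u + v) w = P.mul u w + P.mul v w := by
  unfold mul
  refine Finsupp.sum_add_index' (fun a => ?_) (fun a r₁ r₂ => ?_)
  · simp
  · simp only [_root_.add_mul, Finsupp.single_add, Finsupp.sum_add]

lemma mul_add (u v w : G →₀ R) : P.mul u (v + w) = P.mul u v + P.mul u w := by
  unfold mul
  rw [← Finsupp.sum_add]
  refine Finsupp.sum_congr fun a _ => Finsupp.sum_add_index' (fun b => ?_) (fun b s₁ s₂ => ?_)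
  · rw [pi_zero, Finsupp.sum_zero_index]
  · rw [P.d3]
    exact Finsupp.sum_add_index' (fun c => by simp)
      (fun c t₁ t₂ => by simp only [_root_.mul_add, Finsupp.single_add])

lemma zero_mul (v : G →₀ R) : P.mul 0 v = 0 := Finsupp.sum_zero_index

lemma sum_mul {α M : Type*} [Zero M] (f : α →₀ M) (g : α → M → G →₀ R) (w : G →₀ R) :
    P.mul (f.sum g) w = f.sum fun a m => P.mul (g a m) w :=
  map_finsuppSum (AddMonoidHom.mk' (P.mul · w) fun u v => P.add_mul u v w) f g

lemma mul_sum {α M : Type*} [Zero M] (u : G →₀ R) (f : α →₀ M) (g : α → M → G →₀ R) :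
    P.mul u (f.sum g) = f.sum fun a m => P.mul u (g a m) :=
  map_finsuppSum (AddMonoidHom.mk' (P.mul u) (P.mul_add u)) f g

lemma single_mul_single (a b : G) (r t : R) :
    P.mul (Finsupp.single a r) (Finsupp.single b t)
      = (P.π a t).sum fun c x => Finsupp.single (c * b) (r * x) := by
  unfold mul
  rw [Finsupp.sum_single_index (by simp), Finsupp.sum_single_index (by simp [pi_zero])]

lemma single_mul_single_one (a b : G) (r : R) :
    P.mul (Finsupp.single a r) (Finsupp.single b 1) = Finsupp.single (a * b) r := by
  rw [single_mul_single, P.d2, Finsupp.sum_single_index (by simp), _root_.mul_one]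

lemma single_mul_single_of_mem_fixed (a c : G) (r : R) {σ : R} (hσ : σ ∈ P.fixed) :
    P.mul (Finsupp.single a r) (Finsupp.single c σ) = Finsupp.single (a * c) (r * σ) := by
  rw [single_mul_single, hσ a, Finsupp.sum_single_index (by simp)]

lemma assocS_add_left (u u' v w : G →₀ R) :
    P.assocS (u + u') v w = P.assocS u v w + P.assocS u' v w := by
  simp only [assocS, add_mul]
  abel

lemma assocS_add_middle (u v v' w : G →₀ R) :
    P.assocS u (v + v') w = P.assocS u v w + P.assocS u v' w := by
  simp only [assocS, add_mul, mul_add]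
  abel

lemma assocS_add_right (u v w w' : G →₀ R) :
    P.assocS u v (w + w') = P.assocS u v w + P.assocS u v w' := by
  simp only [assocS, mul_add]
  abel

lemma eq_zero_of_mem_closure_mul {a : R → R → G →₀ R} (ha : ∀ r t, a r t = 0) {x : G →₀ R}
    (hx : x ∈ AddSubgroup.closure
      {z : G →₀ R | ∃ (r t : R) (w : G →₀ R), z = P.mul (a r t) w}) :
    x = 0 := by
  rw [AddSubgroup.closure_eq_bot_iff.mpr, AddSubgroup.mem_bot] at hx
  · exact hx
  · rintro _ ⟨r, t, w, rfl⟩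
    rw [ha, zero_mul, Set.mem_singleton_iff]

lemma eqOn_fixedS_of_eq_single {M : Type*} [AddCommGroup M] {f g : (G →₀ R) → M}
    (hf : ∀ u v, f (u + v) = f u + f v) (hg : ∀ u v, g (u + v) = g u + g v)
    (h : ∀ c, ∀ σ ∈ P.fixed, f (Finsupp.single c σ) = g (Finsupp.single c σ)) :
    Set.EqOn f g P.fixedS := by
  intro s hs
  calc f s = f (s.sum Finsupp.single) := by rw [Finsupp.sum_single]
    _ = s.sum fun c σ => f (Finsupp.single c σ) := map_finsuppSum (AddMonoidHom.mk' f hf) _ _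
    _ = s.sum fun c σ => g (Finsupp.single c σ) :=
      Finsupp.sum_congr fun c _ => h c (s c) (hs c)
    _ = g (s.sum Finsupp.single) := (map_finsuppSum (AddMonoidHom.mk' g hg) _ _).symm
    _ = g s := by rw [Finsupp.sum_single]

lemma assocS_single_single_single_of_leftLinear (hL : P.LeftLinear) (a c b : G) (r t : R)
    {σ : R} (hσ : σ ∈ P.fixed) :
    P.assocS (Finsupp.single a r) (Finsupp.single c σ) (Finsupp.single b t)
      = (P.π (a * c) t).sum fun e z => Finsupp.single (e * b) (associator r σ z) := by
  have hright : P.mul (Finsupp.single a r) (P.mul (Finsupp.single c σ) (Finsupp.single b t))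
      = (P.π (a * c) t).sum fun e z => Finsupp.single (e * b) (r * (σ * z)) := by
    rw [single_mul_single, mul_sum, P.sum_pi_mul _ _ _ _ (by simp)
      (fun _ _ _ => by simp only [_root_.mul_add, Finsupp.single_add])]
    refine Finsupp.sum_congr fun f _ => ?_
    rw [single_mul_single, P.pi_mul_left_of_mem_fixed hL hσ,
      Finsupp.sum_mapRange_index (by simp)]
    simp only [mul_assoc]
  rw [assocS, single_mul_single_of_mem_fixed _ _ _ _ hσ, single_mul_single, hright,
    ← Finsupp.sum_sub]
  exact Finsupp.sum_congr fun e _ => (Finsupp.single_sub _ _ _).symm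

lemma assocS_single_single_single_of_rightLinear (hR : P.RightLinear) (a b e : G) (r t : R)
    {σ : R} (hσ : σ ∈ P.fixed) :
    P.assocS (Finsupp.single a r) (Finsupp.single b t) (Finsupp.single e σ)
      = (P.π a t).sum fun c x => Finsupp.single (c * b * e) (associator r x σ) := by
  have hleft : P.mul (P.mul (Finsupp.single a r) (Finsupp.single b t)) (Finsupp.single e σ)
      = (P.π a t).sum fun c x => Finsupp.single (c * b * e) (r * x * σ) := by
    rw [single_mul_single, sum_mul]
    exact Finsupp.sum_congr fun c _ => P.single_mul_single_of_mem_fixed _ _ _ hσ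
  rw [assocS, hleft, single_mul_single_of_mem_fixed _ _ _ _ hσ, single_mul_single,
    P.pi_mul_right_of_mem_fixed hR hσ, Finsupp.sum_mapRange_index (by simp), ← Finsupp.sum_sub]
  exact Finsupp.sum_congr fun c _ => by rw [mul_assoc, ← Finsupp.single_sub, associator_apply]

end Monoid

section CommMonoid

variable {R : Type*} [NonAssocRing R] {G : Type*} [CommMonoid G] (P : GDeriv R G)

lemma assocS_single_mem_fixedS_single (hL : P.LeftLinear) {s : G →₀ R} (hs : s ∈ P.fixedS)
    (a b : G) (r t : R) :
    P.assocS (Finsupp.single a r) s (Finsupp.single b t)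
      = (P.π a t).sum fun d x =>
          P.mul (P.assocS (Finsupp.single 1 r) s (Finsupp.single 1 x))
            (Finsupp.single (d * b) 1) := by
  refine P.eqOn_fixedS_of_eq_single
    (f := fun s => P.assocS (Finsupp.single a r) s (Finsupp.single b t))
    (g := fun s => (P.π a t).sum fun d x =>
      P.mul (P.assocS (Finsupp.single 1 r) s (Finsupp.single 1 x)) (Finsupp.single (d * b) 1))
    (fun u v => P.assocS_add_middle _ u v _) (fun u v => ?_) (fun c σ hσ => ?_) hs
  · simp only [assocS_add_middle, add_mul, Finsupp.sum_add]
  rw [assocS_single_single_single_of_leftLinear _ hL _ _ _ _ _ hσ, mul_comm a c,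
    P.sum_pi_mul _ _ _ _ (by simp [associator_apply])
      (fun _ _ _ => by simp only [← AddMonoidHom.associator_apply, map_add, Finsupp.single_add])]
  refine Finsupp.sum_congr fun d _ => ?_
  rw [assocS_single_single_single_of_leftLinear _ hL _ _ _ _ _ hσ, one_mul, sum_mul]
  refine Finsupp.sum_congr fun e _ => ?_
  rw [single_mul_single_one, mul_one, mul_assoc]

lemma assocS_single_single_mem_fixedS (hR : P.RightLinear) {s : G →₀ R} (hs : s ∈ P.fixedS)
    (a b : G) (r t : R) :
    P.assocS (Finsupp.single a r) (Finsupp.single b t) s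
      = (P.π a t).sum fun c x =>
          P.mul (P.assocS (Finsupp.single 1 r) (Finsupp.single 1 x) s)
            (Finsupp.single (c * b) 1) := by
  refine P.eqOn_fixedS_of_eq_single
    (f := fun s => P.assocS (Finsupp.single a r) (Finsupp.single b t) s)
    (g := fun s => (P.π a t).sum fun c x =>
      P.mul (P.assocS (Finsupp.single 1 r) (Finsupp.single 1 x) s) (Finsupp.single (c * b) 1))
    (fun u v => P.assocS_add_right _ _ u v) (fun u v => ?_) (fun e σ hσ => ?_) hs
  · simp only [assocS_add_right, add_mul, Finsupp.sum_add]
  rw [assocS_single_single_single_of_rightLinear _ hR _ _ _ _ _ hσ]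
  refine Finsupp.sum_congr fun c _ => ?_
  rw [assocS_single_single_single_of_rightLinear _ hR _ _ _ _ _ hσ, P.d1,
    Finsupp.sum_single_index (by simp [associator_apply]), single_mul_single_one, mul_one,
    one_mul, mul_comm e]

lemma assocS_mem_closure_middle (hL : P.LeftLinear) {s : G →₀ R} (hs : s ∈ P.fixedS)
    (u v : G →₀ R) :
    P.assocS u s v ∈ AddSubgroup.closure {z : G →₀ R | ∃ (r t : R) (w : G →₀ R),
      z = P.mul (P.assocS (Finsupp.single 1 r) s (Finsupp.single 1 t)) w} := by
  refine AddSubgroup.mem_of_biadditive_of_single_mem _ (F := (P.assocS · s ·))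
    (fun u u' v => P.assocS_add_left u u' s v) (fun u v v' => P.assocS_add_right u s v v')
    (fun a r b t => ?_) u v
  rw [P.assocS_single_mem_fixedS_single hL hs]
  exact AddSubmonoidClass.finsuppSum_mem _ _ _ fun f _ =>
    AddSubgroup.subset_closure ⟨r, _, _, rfl⟩

lemma assocS_mem_closure_right (hR : P.RightLinear) {s : G →₀ R} (hs : s ∈ P.fixedS)
    (u v : G →₀ R) :
    P.assocS u v s ∈ AddSubgroup.closure {z : G →₀ R | ∃ (r t : R) (w : G →₀ R),
      z = P.mul (P.assocS (Finsupp.single 1 r) (Finsupp.single 1 t) s) w} := by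
  refine AddSubgroup.mem_of_biadditive_of_single_mem _ (F := (P.assocS · · s))
    (fun u u' v => P.assocS_add_left u u' v s) (fun u v v' => P.assocS_add_middle u v v' s)
    (fun a r b t => ?_) u v
  rw [P.assocS_single_single_mem_fixedS hR hs]
  exact AddSubmonoidClass.finsuppSum_mem _ _ _ fun c _ =>
    AddSubgroup.subset_closure ⟨r, _, _, rfl⟩

end CommMonoid

end GDeriv

/-- Let `G` be commutative and `s ∈ S^G`.  If (D7) holds, then every
associator `(u,s,v)` lies in the additive subgroup generated by `(r,s,t)·w`
(`r,t ∈ R`, `w ∈ S`); in particular `(r,s,t) = 0` for all `r,t ∈ R` implies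
`s ∈ N_m(S)`.  If (D8) holds, then every `(u,v,s)` lies in the additive subgroup
generated by `(r,t,s)·w`; in particular `(r,t,s) = 0` for all `r,t ∈ R` implies
`s ∈ N_r(S)`. -/
theorem stmt6 {R : Type*} [NonAssocRing R] {G : Type*} [CommMonoid G]
    (P : GDeriv R G) {s : G →₀ R} (hs : s ∈ P.fixedS) :
    (P.LeftLinear →
      (∀ u v : G →₀ R, P.assocS u s v ∈ AddSubgroup.closure
        {z : G →₀ R | ∃ (r t : R) (w : G →₀ R),
          z = P.mul (P.assocS (Finsupp.single 1 r) s (Finsupp.single 1 t)) w}) ∧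
      ((∀ r t : R, P.assocS (Finsupp.single 1 r) s (Finsupp.single 1 t) = 0) →
        s ∈ P.Nm)) ∧
    (P.RightLinear →
      (∀ u v : G →₀ R, P.assocS u v s ∈ AddSubgroup.closure
        {z : G →₀ R | ∃ (r t : R) (w : G →₀ R),
          z = P.mul (P.assocS (Finsupp.single 1 r) (Finsupp.single 1 t) s) w}) ∧
      ((∀ r t : R, P.assocS (Finsupp.single 1 r) (Finsupp.single 1 t) s = 0) →
        s ∈ P.Nr)) :=
  ⟨fun hL => ⟨P.assocS_mem_closure_middle hL hs,
      fun h0 u v => P.eq_zero_of_mem_closure_mul h0 (P.assocS_mem_closure_middle hL hs u v)⟩,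
    fun hR => ⟨P.assocS_mem_closure_right hR hs,
      fun h0 u v => P.eq_zero_of_mem_closure_mul h0 (P.assocS_mem_closure_right hR hs u v)⟩⟩
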